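/- arXiv:0806.4809 — 5 statements merged into one kernel-verified Lean document; each statement's English description precedes it below -/
import Mathlib

section
/- For all integers k ≥ 0, 0 ≤ i ≤ k, and j ≥ 0, the number of directed paths D_k(i,j) satisfies D_k(i,j) = (2/(k+2)) · Σ_{r=1}^{k+1} (-1)^{r+1} · U_{k-i}(cos(rπ/(k+2))) · sin²(rπ/(k+2)) · (2·cos(rπ/(k+2)))^j. -/
open Real Polynomial Polynomial.Chebyshev Finset

/-- Number of directed paths from `(0,0)` to `(j,i)` in the Bratteli diagram for `SU(2)_k`. -/
def bratteliD (k : ℕ) : ℕ → ℕ → ℕ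
  | i, 0 => if i = 0 then 1 else 0
  | i, j + 1 =>
      if i ≤ k then
        (if 1 ≤ i then bratteliD k (i - 1) j else 0) +
        (if i + 1 ≤ k then bratteliD k (i + 1) j else 0)
      else 0


/-!
Put `θ_r = r π / (k + 2)`. For each `r`, the vector `m ↦ sin (m θ_r)` vanishes at `m = 0` and
`m = k + 2` and satisfies `sin ((m + 1) θ_r) + sin ((m - 1) θ_r) = 2 cos θ_r · sin (m θ_r)`, so it is
an eigenvector, with eigenvalue `2 cos θ_r`, of the transfer matrix of the Bratteli diagram read
through `m = k + 1 - i`. Discrete orthogonality of these sine vectors expands the initial condition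
`D_k(i, 0) = [i = 0]` in this eigenbasis, and `U_{k-i}(cos θ) sin θ = sin ((k + 1 - i) θ)` together
with `sin ((k + 1) θ_r) = (-1)^(r+1) sin θ_r` turns the expansion into the stated formula.
-/

theorem sum_Ico_cos_mul_pi_div (n c : ℕ) (hc₀ : 0 < c) (hc : c < 2 * n) :
    ∑ r ∈ Ico 1 n, cos (c * (r * π / n)) = -(1 + (-1) ^ c) / 2 := by
  have hn : 0 < n := by omega
  set φ := c * π / n
  have hφ : 0 < sin (φ / 2) := by
    apply sin_pos_of_pos_of_lt_pi (by positivity)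
    rw [div_div, div_lt_iff₀ (by positivity)]
    have : (c : ℝ) < 2 * n := by exact_mod_cast hc
    nlinarith [pi_pos]
  have h_range : sin (φ / 2) * ∑ r ∈ range n, cos (φ * r) = (1 - (-1) ^ c) / 2 * sin (φ / 2) := by
    have h := two_mul_sin_mul_cos (n * φ / 2) ((n - 1) * φ / 2)
    have e₁ : n * φ / 2 - (n - 1) * φ / 2 = φ / 2 := by ring
    have e₂ : n * φ / 2 + (n - 1) * φ / 2 = c * π - φ / 2 := by
      simp only [φ]; field_simp; ring
    rw [e₁, e₂, sin_nat_mul_pi_sub] at h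
    have h_sum := sin_mul_sum_cos n φ 0
    simp only [add_zero] at h_sum
    rw [h_sum]
    linear_combination h / 2
  rw [sum_range_eq_add_Ico _ hn, CharP.cast_eq_zero, mul_zero, cos_zero] at h_range
  have h_angle : ∑ r ∈ Ico 1 n, cos (c * (r * π / n)) = ∑ r ∈ Ico 1 n, cos (φ * r) :=
    sum_congr rfl fun r _ => congrArg cos (by simp only [φ]; ring)
  rw [h_angle]
  apply mul_left_cancel₀ hφ.ne'
  linear_combination h_range

theorem sum_Ico_sin_mul_sin_mul_pi_div (n a b : ℕ) (ha₀ : 0 < a) (ha : a < n) (hb₀ : 0 < b)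
    (hb : b < n) :
    ∑ r ∈ Ico 1 n, sin (a * (r * π / n)) * sin (b * (r * π / n)) =
      if a = b then (n : ℝ) / 2 else 0 := by
  wlog hab : a ≤ b generalizing a b
  · simpa only [mul_comm (sin (b * _)), eq_comm (a := b)] using this b a hb₀ hb ha₀ ha (by omega)
  have h_sum : 2 * ∑ r ∈ Ico 1 n, sin (a * (r * π / n)) * sin (b * (r * π / n)) =
      ∑ r ∈ Ico 1 n, cos ((b - a : ℕ) * (r * π / n)) -
        ∑ r ∈ Ico 1 n, cos ((a + b : ℕ) * (r * π / n)) := by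
    rw [mul_sum, ← sum_sub_distrib]
    refine sum_congr rfl fun r _ => ?_
    rw [← mul_assoc, two_mul_sin_mul_sin, ← cos_neg]
    push_cast [hab]
    ring_nf
  rw [sum_Ico_cos_mul_pi_div n (a + b) (by omega) (by omega)] at h_sum
  rcases hab.eq_or_lt with rfl | hlt
  · simp only [Nat.sub_self, CharP.cast_eq_zero, zero_mul, cos_zero, sum_const, Nat.card_Ico,
      nsmul_eq_mul, mul_one, ← two_mul, pow_mul, neg_one_sq, one_pow] at h_sum
    push_cast [Nat.cast_sub (show 1 ≤ n by omega)] at h_sum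
    rw [if_pos rfl]
    linear_combination h_sum / 2
  · have h_parity : (-1 : ℝ) ^ (a + b) = (-1) ^ (b - a) := by
      rw [show a + b = b - a + 2 * a by omega, pow_add, pow_mul]
      norm_num
    rw [sum_Ico_cos_mul_pi_div n (b - a) (by omega) (by omega), h_parity] at h_sum
    rw [if_neg hlt.ne]
    linarith

theorem bratteliD_eq_of_recursion (k : ℕ) (f : ℤ → ℕ → ℝ) (h_bot : ∀ j, f 0 j = 0)
    (h_top : ∀ j, f (k + 2) j = 0) (h_succ : ∀ m j, f m (j + 1) = f (m + 1) j + f (m - 1) j)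
    (h_init : ∀ i ≤ k, f (k + 1 - i) 0 = if i = 0 then 1 else 0) (j i : ℕ) (hi : i ≤ k) :
    (bratteliD k i j : ℝ) = f (k + 1 - i) j := by
  induction j generalizing i with
  | zero => simp [bratteliD, h_init i hi]
  | succ j ih =>
    have h_down : ((if 1 ≤ i then bratteliD k (i - 1) j else 0 : ℕ) : ℝ) =
        f (k + 1 - i + 1) j := by
      split_ifs with h
      · rw [ih _ (by omega)]; push_cast [h]; ring_nf
      · obtain rfl : i = 0 := by omega
        simpa [add_assoc] using (h_top j).symm
    have h_up : ((if i + 1 ≤ k then bratteliD k (i + 1) j else 0 : ℕ) : ℝ) =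
        f (k + 1 - i - 1) j := by
      split_ifs with h
      · rw [ih _ h]; push_cast; ring_nf
      · obtain rfl : i = k := by omega
        simpa using (h_bot j).symm
    rw [bratteliD, if_pos hi, Nat.cast_add, h_down, h_up, h_succ]

/-- For `0 < m, b < n` this is the number of walks of length `j` from `b` to `m` in the path
graph `1 — 2 — ⋯ — (n - 1)`. -/
noncomputable def sineWalkCount (n b : ℕ) (m : ℤ) (j : ℕ) : ℝ :=
  2 / n * ∑ r ∈ Ico 1 n, sin (m * (r * π / n)) * sin (b * (r * π / n)) * (2 * cos (r * π / n)) ^ j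

theorem sineWalkCount_zero_left (n b j : ℕ) : sineWalkCount n b 0 j = 0 := by
  simp [sineWalkCount]

theorem sineWalkCount_self_left (n b j : ℕ) : sineWalkCount n b n j = 0 := by
  rcases n.eq_zero_or_pos with rfl | hn
  · simp [sineWalkCount]
  refine mul_eq_zero_of_right _ (sum_eq_zero fun r _ => ?_)
  rw [Int.cast_natCast, mul_div_cancel₀ _ (by positivity : (n : ℝ) ≠ 0), sin_nat_mul_pi]
  simp

theorem sineWalkCount_succ (n b : ℕ) (m : ℤ) (j : ℕ) :
    sineWalkCount n b m (j + 1) = sineWalkCount n b (m + 1) j + sineWalkCount n b (m - 1) j := by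
  simp only [sineWalkCount, ← mul_add, ← sum_add_distrib]
  congr 1
  refine sum_congr rfl fun r _ => ?_
  set θ := r * π / n
  have h := two_mul_sin_mul_cos (m * θ) θ
  push_cast
  rw [pow_succ, add_mul, sub_mul, one_mul]
  linear_combination (sin (b * θ) * (2 * cos θ) ^ j) * h

theorem sineWalkCount_zero_right (n b m : ℕ) (hm₀ : 0 < m) (hm : m < n) (hb₀ : 0 < b)
    (hb : b < n) : sineWalkCount n b m 0 = if m = b then 1 else 0 := by
  simp only [sineWalkCount, pow_zero, mul_one, Int.cast_natCast,
    sum_Ico_sin_mul_sin_mul_pi_div n m b hm₀ hm hb₀ hb]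
  split_ifs
  · have hn : (n : ℝ) ≠ 0 := by exact_mod_cast (show n ≠ 0 by omega)
    field_simp
  · simp

theorem bratteliD_explicit_formula (k i j : ℕ) (hik : i ≤ k) :
    (bratteliD k i j : ℝ) =
      (2 / (k + 2)) * ∑ r ∈ Finset.Icc 1 (k + 1),
        (-1) ^ (r + 1) * (Chebyshev.U ℝ ((k : ℤ) - i)).eval (Real.cos (r * π / (k + 2))) *
          (Real.sin (r * π / (k + 2))) ^ 2 * (2 * Real.cos (r * π / (k + 2))) ^ j := by
  have h_init (i : ℕ) (hi : i ≤ k) :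
      sineWalkCount (k + 2) (k + 1) (k + 1 - i) 0 = if i = 0 then 1 else 0 := by
    have h := sineWalkCount_zero_right (k + 2) (k + 1) (k + 1 - i)
      (by omega) (by omega) (by omega) (by omega)
    push_cast [show i ≤ k + 1 by omega] at h
    simpa [show k + 1 - i = k + 1 ↔ i = 0 by omega] using h
  rw [bratteliD_eq_of_recursion k (sineWalkCount (k + 2) (k + 1)) (sineWalkCount_zero_left _ _)
    (by exact_mod_cast sineWalkCount_self_left (k + 2) (k + 1)) (sineWalkCount_succ _ _)
    h_init j i hik, sineWalkCount]
  push_cast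
  congr 1
  refine sum_congr rfl fun r _ => ?_
  set θ := r * π / (k + 2)
  have h_cheb := U_real_cos θ ((k : ℤ) - i)
  rw [Int.cast_sub, Int.cast_natCast, Int.cast_natCast, sub_add_eq_add_sub] at h_cheb
  have h_refl : sin ((k + 1) * θ) = (-1) ^ (r + 1) * sin θ := by
    rw [show (k + 1) * θ = r * π - θ by simp only [θ]; field_simp; ring, sin_nat_mul_pi_sub]
    ring
  rw [h_refl]
  linear_combination -((-1) ^ (r + 1) * sin θ * (2 * cos θ) ^ j) * h_cheb
end

section
/- For all integers k ≥ 0 and 0 ≤ i ≤ k, and for every real number x that is not equal to cos(rπ/(k+2)) for any r ∈ {1,…,k+1}, one has U_{k-i}(x)/U_{k+1}(x) = (1/(k+2)) · Σ_{r=1}^{k+1} (-1)^{r+1} · U_{k-i}(cos(rπ/(k+2))) · sin²(rπ/(k+2)) / (x − cos(rπ/(k+2))). -/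
open Real Polynomial Polynomial.Chebyshev Finset

/-!
The nodes `cos (r π / (n + 1))`, `1 ≤ r ≤ n`, are the `n` distinct roots of `U_n`, which has
degree `n`. If `Q` has `deg Q` distinct roots `v` and `deg P < deg Q`, Lagrange interpolation of
`P` at those roots gives the partial-fraction expansion `P x / Q x = ∑ P(v) / (Q'(v) (x - v))`. The residues come from
`(n + 1) T_{n+1} = X U_n - (1 - X²) U_n'`: at a root `cos θ` of `U_n` it reads
`sin² θ · U_n'(cos θ) = -(n + 1) cos ((n + 1) θ)`, which is `(-1)^(r+1) (n + 1)` at the nodes.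
-/

namespace Lagrange

variable {F ι : Type*} [Field F] {s : Finset ι} {v : ι → F}

theorem eq_C_leadingCoeff_mul_nodal {Q : F[X]} (hvs : Set.InjOn v s) (hQ : Q.degree = #s)
    (hroot : ∀ i ∈ s, Q.eval (v i) = 0) : Q = C Q.leadingCoeff * nodal s v := by
  have hQ0 : Q ≠ 0 := by rintro rfl; simp at hQ
  have hlc : Q.leadingCoeff ≠ 0 := leadingCoeff_ne_zero.2 hQ0
  refine eq_of_degree_le_of_eval_index_eq s hvs hQ.le ?_ ?_ ?_
  · rw [degree_C_mul hlc, degree_nodal, hQ]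
  · rw [leadingCoeff_C_mul_of_isUnit hlc.isUnit, nodal_monic.leadingCoeff, mul_one]
  · intro i hi
    rw [hroot i hi, eval_mul, eval_nodal_at_node hi, mul_zero]

theorem eval_div_eval_eq_sum_div [DecidableEq ι] {P Q : F[X]} {x : F} (hvs : Set.InjOn v s)
    (hP : P.degree < #s) (hQ : Q.degree = #s) (hroot : ∀ i ∈ s, Q.eval (v i) = 0)
    (hx : ∀ i ∈ s, x ≠ v i) :
    P.eval x / Q.eval x =
      ∑ i ∈ s, P.eval (v i) / ((derivative Q).eval (v i) * (x - v i)) := by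
  have hnodal : (nodal s v).eval x ≠ 0 := eval_nodal_not_at_node hx
  have hPx : P.eval x =
      (nodal s v).eval x * ∑ i ∈ s, nodalWeight s v i * (x - v i)⁻¹ * P.eval (v i) := by
    conv_lhs => rw [eq_interpolate hvs hP]
    exact eval_interpolate_not_at_node _ hx
  rw [hPx, eq_C_leadingCoeff_mul_nodal hvs hQ hroot, eval_mul, eval_C, mul_comm Q.leadingCoeff,
    mul_div_mul_left _ _ hnodal, sum_div]
  refine sum_congr rfl fun i hi => ?_
  rw [nodalWeight_eq_eval_derivative_nodal hi, derivative_C_mul, eval_mul, eval_C]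
  have := sub_ne_zero.2 (hx i hi)
  field_simp

end Lagrange

theorem Real.sin_nat_mul_pi_div_pos {r m : ℕ} (hr : 0 < r) (hrm : r < m) :
    0 < sin (r * π / m) := by
  have hm : (0 : ℝ) < m := by exact_mod_cast hr.trans hrm
  refine sin_pos_of_pos_of_lt_pi (by positivity) ?_
  rw [div_lt_iff₀ hm, mul_comm]
  gcongr

theorem Real.injOn_cos_nat_mul_pi_div (m : ℕ) :
    Set.InjOn (fun r : ℕ => cos (r * π / m)) (Set.Iic m) := by
  intro a ha b hb hab
  rcases m.eq_zero_or_pos with rfl | hm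
  · simp_all
  have hmem : ∀ r ∈ Set.Iic m, (r : ℝ) * π / m ∈ Set.Icc 0 π := fun r hr =>
    ⟨by positivity, by
      rw [div_le_iff₀ (by exact_mod_cast hm), mul_comm]
      gcongr
      exact_mod_cast hr⟩
  have := injOn_cos (hmem a ha) (hmem b hb) hab
  field_simp at this
  exact_mod_cast this

namespace Polynomial.Chebyshev

theorem sin_sq_mul_eval_derivative_U_real_cos {n : ℤ} {θ : ℝ}
    (h : (U ℝ n).eval (cos θ) = 0) :
    sin θ ^ 2 * (derivative (U ℝ n)).eval (cos θ) = -((n + 1) * cos ((n + 1) * θ)) := by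
  have := congrArg (eval (cos θ)) (add_one_mul_T_eq_poly_in_U (R := ℝ) n)
  simp only [eval_mul, eval_add, eval_sub, eval_pow, eval_X, eval_one, eval_intCast, h,
    T_real_cos] at this
  push_cast at this
  linear_combination this + (derivative (U ℝ n)).eval (cos θ) * sin_sq_add_cos_sq θ

theorem eval_U_real_cos_nat_mul_pi_div {n r : ℕ} (hr : 0 < r) (hrn : r < n + 1) :
    (U ℝ n).eval (cos (r * π / (n + 1))) = 0 := by
  have hsin := sin_nat_mul_pi_div_pos hr hrn
  push_cast at hsin
  have := U_real_cos (r * π / (n + 1)) n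
  rw [show ((n : ℤ) + 1 : ℝ) * (r * π / (n + 1)) = r * π by push_cast; field_simp,
    sin_nat_mul_pi] at this
  exact (mul_eq_zero.1 this).resolve_right hsin.ne'

theorem sin_sq_mul_eval_derivative_U_real_cos_nat_mul_pi_div {n r : ℕ} (hr : 0 < r)
    (hrn : r < n + 1) :
    sin (r * π / (n + 1)) ^ 2 * (derivative (U ℝ n)).eval (cos (r * π / (n + 1))) =
      (-1) ^ (r + 1) * (n + 1) := by
  rw [sin_sq_mul_eval_derivative_U_real_cos (eval_U_real_cos_nat_mul_pi_div hr hrn),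
    show ((n : ℤ) + 1 : ℝ) * (r * π / (n + 1)) = r * π by push_cast; field_simp,
    cos_nat_mul_pi]
  push_cast
  ring

theorem eval_U_real_div_eval_U_real_eq_sum {m n : ℕ} (hmn : m < n) {x : ℝ}
    (hx : ∀ r ∈ Icc 1 n, x ≠ cos (r * π / (n + 1))) :
    (U ℝ m).eval x / (U ℝ n).eval x =
      1 / (n + 1) * ∑ r ∈ Icc 1 n, (-1) ^ (r + 1) * (U ℝ m).eval (cos (r * π / (n + 1))) *
        sin (r * π / (n + 1)) ^ 2 / (x - cos (r * π / (n + 1))) := by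
  have hnodes : Set.InjOn (fun r : ℕ => cos (r * π / (n + 1))) (Icc 1 n) := by
    exact_mod_cast (injOn_cos_nat_mul_pi_div (n + 1)).mono fun r hr =>
      (mem_Icc.1 hr).2.trans n.le_succ
  have hcard : #(Icc 1 n) = n := by simp
  have hroots : ∀ r ∈ Icc 1 n, (U ℝ n).eval (cos (r * π / (n + 1))) = 0 := fun r hr =>
    eval_U_real_cos_nat_mul_pi_div (mem_Icc.1 hr).1 (Nat.lt_succ_of_le (mem_Icc.1 hr).2)
  rw [Lagrange.eval_div_eval_eq_sum_div hnodes
    (by rw [degree_U_natCast, hcard]; exact_mod_cast hmn) (by rw [degree_U_natCast, hcard])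
    hroots hx, mul_sum]
  refine sum_congr rfl fun r hr => ?_
  obtain ⟨hr1, hrn⟩ := mem_Icc.1 hr
  have hsin := sin_nat_mul_pi_div_pos hr1 (Nat.lt_succ_of_le hrn)
  have hderiv := sin_sq_mul_eval_derivative_U_real_cos_nat_mul_pi_div hr1 (Nat.lt_succ_of_le hrn)
  have hxr := sub_ne_zero.2 (hx r hr)
  push_cast at hsin
  rw [mul_comm, ← eq_div_iff (by positivity)] at hderiv
  rw [hderiv]
  field_simp
  rw [← pow_mul, Even.neg_one_pow ⟨r + 1, by ring⟩, mul_one]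

end Polynomial.Chebyshev

theorem chebyshevU_ratio_partial_fractions (k i : ℕ) (hik : i ≤ k) (x : ℝ)
    (hx : ∀ r ∈ Finset.Icc 1 (k + 1), x ≠ Real.cos (r * π / (k + 2))) :
    (Chebyshev.U ℝ ((k : ℤ) - i)).eval x / (Chebyshev.U ℝ ((k : ℤ) + 1)).eval x =
      (1 / (k + 2)) * ∑ r ∈ Finset.Icc 1 (k + 1),
        (-1) ^ (r + 1) * (Chebyshev.U ℝ ((k : ℤ) - i)).eval (Real.cos (r * π / (k + 2))) *
          (Real.sin (r * π / (k + 2))) ^ 2 / (x - Real.cos (r * π / (k + 2))) := by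
  have hk : ((k + 1 : ℕ) : ℝ) + 1 = k + 2 := by push_cast; ring
  have h := eval_U_real_div_eval_U_real_eq_sum (x := x) (show k - i < k + 1 by omega)
    (by rwa [hk])
  rw [hk] at h
  push_cast [Nat.cast_sub hik] at h
  exact h
end

section
/- For all integers k ≥ 0 and 0 ≤ i ≤ k, and every real x with 0 < |x| < 1/(2·cos(π/(k+2))), the series Σ_{j≥0} D_k(i,j)·x^j converges absolutely and satisfies x · U_{k+1}(1/(2x)) · Σ_{j≥0} D_k(i,j)·x^j = U_{k-i}(1/(2x)); equivalently, the generating function D_k(x;i) = Σ_{j≥0} D_k(i,j) x^j equals U_{k-i}(1/(2x)) / (x · U_{k+1}(1/(2x))). -/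
open Real Polynomial Polynomial.Chebyshev

theorem bratteliD_eq_zero_of_lt {k n : ℕ} (h : k < n) : ∀ j, bratteliD k n j = 0
  | 0 => if_neg (by omega)
  | _ + 1 => if_neg (by omega)

theorem bratteliD_zero_succ (k j : ℕ) : bratteliD k 0 (j + 1) = bratteliD k 1 j := by
  by_cases hk : 1 ≤ k
  · simp [bratteliD, hk]
  · simp [bratteliD, hk, bratteliD_eq_zero_of_lt (show k < 1 by omega)]

theorem bratteliD_succ_succ {k n : ℕ} (hn : n + 1 ≤ k) (j : ℕ) :
    bratteliD k (n + 1) (j + 1) = bratteliD k n j + bratteliD k (n + 2) j := by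
  by_cases h : n + 2 ≤ k
  · simp [bratteliD, hn, h]
  · simp [bratteliD, hn, h, bratteliD_eq_zero_of_lt (show k < n + 2 by omega)]

theorem bratteliD_mul_le_of_eigenvector {k : ℕ} {v : ℕ → ℝ} {c : ℝ} (hv0 : v 0 = 0)
    (hvk : v (k + 2) = 0) (hv_nonneg : ∀ n ≤ k, 0 ≤ v (n + 1))
    (hv : ∀ n ≤ k, v n + v (n + 2) = c * v (n + 1)) (j : ℕ) :
    ∀ n ≤ k, bratteliD k n j * v 1 ≤ v (n + 1) * c ^ j := by
  induction j with
  | zero =>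
    rintro (_ | n) hn
    · simp [bratteliD]
    · simpa [bratteliD] using hv_nonneg (n + 1) hn
  | succ j ih =>
    have ih_succ : ∀ n ≤ k, bratteliD k (n + 1) j * v 1 ≤ v (n + 2) * c ^ j := by
      intro n hn
      rcases hn.lt_or_eq with hn | rfl
      · exact ih (n + 1) hn
      · simp [bratteliD_eq_zero_of_lt, hvk]
    have hstep : ∀ n ≤ k, v (n + 1) * c ^ (j + 1) = (v n + v (n + 2)) * c ^ j := by
      intro n hn
      rw [hv n hn]
      ring
    rintro (_ | n) hn
    · rw [bratteliD_zero_succ, hstep 0 hn, hv0, zero_add]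
      exact ih_succ 0 hn
    · rw [bratteliD_succ_succ hn, hstep (n + 1) hn]
      push_cast
      linarith [ih n (by omega), ih_succ (n + 1) hn]

theorem sin_add_sin_eq_two_mul_cos_mul_sin (n : ℕ) (θ : ℝ) :
    sin (n * θ) + sin ((n + 2 : ℕ) * θ) = 2 * cos θ * sin ((n + 1 : ℕ) * θ) := by
  have hl : (n : ℝ) * θ = (n + 1 : ℕ) * θ - θ := by push_cast; ring
  have hr : ((n + 2 : ℕ) : ℝ) * θ = (n + 1 : ℕ) * θ + θ := by push_cast; ring
  rw [hl, hr, sin_sub, sin_add]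
  ring

theorem cos_pi_div_nat_add_two_nonneg (k : ℕ) : 0 ≤ cos (π / (k + 2)) :=
  cos_nonneg_of_mem_Icc ⟨by linarith [pi_pos, div_pos pi_pos (by positivity : (0 : ℝ) < k + 2)],
    div_le_div_of_nonneg_left pi_pos.le two_pos (by linarith [k.cast_nonneg (α := ℝ)])⟩

theorem sin_pi_div_nat_add_two_pos (k : ℕ) : 0 < sin (π / (k + 2)) :=
  sin_pos_of_pos_of_lt_pi (by positivity)
    (div_lt_self pi_pos (by linarith [k.cast_nonneg (α := ℝ)]))

theorem bratteliD_mul_sin_le (k n j : ℕ) :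
    bratteliD k n j * sin (π / (k + 2)) ≤ (2 * cos (π / (k + 2))) ^ j := by
  rcases le_or_gt n k with hn | hn
  swap
  · simp [bratteliD_eq_zero_of_lt hn, cos_pi_div_nat_add_two_nonneg]
  set θ := π / (k + 2)
  have hkθ : (k + 2) * θ = π := mul_div_cancel₀ π (by positivity)
  have hsin_nonneg : ∀ m ≤ k + 2, 0 ≤ sin (m * θ) := by
    intro m hm
    refine sin_nonneg_of_nonneg_of_le_pi (by positivity) ?_
    calc (m : ℝ) * θ ≤ (k + 2) * θ := by gcongr; exact_mod_cast hm
      _ = π := hkθ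
  have h := bratteliD_mul_le_of_eigenvector (v := fun m => sin (m * θ)) (c := 2 * cos θ)
    (by simp) (by push_cast; rw [hkθ, sin_pi]) (fun m hm => hsin_nonneg (m + 1) (by omega))
    (fun m _ => sin_add_sin_eq_two_mul_cos_mul_sin m θ) j n hn
  simp only [Nat.cast_one, one_mul] at h
  have hc : 0 ≤ 2 * cos θ := by linarith [cos_pi_div_nat_add_two_nonneg k]
  exact h.trans (mul_le_of_le_one_left (pow_nonneg hc j) (sin_le_one _))

theorem summable_abs_bratteliD_mul_pow (k n : ℕ) {x : ℝ}
    (hx : 2 * cos (π / (k + 2)) * |x| < 1) :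
    Summable fun j => |(bratteliD k n j : ℝ) * x ^ j| := by
  have hsin := sin_pi_div_nat_add_two_pos k
  have hq : 0 ≤ 2 * cos (π / (k + 2)) * |x| := by
    have := cos_pi_div_nat_add_two_nonneg k
    positivity
  refine .of_nonneg_of_le (fun j => abs_nonneg _) (fun j => ?_)
    ((summable_geometric_of_lt_one hq hx).div_const (sin (π / (k + 2))))
  rw [abs_mul, abs_pow, Nat.abs_cast, le_div_iff₀ hsin, mul_pow, mul_right_comm]
  exact mul_le_mul_of_nonneg_right (bratteliD_mul_sin_le k n j) (by positivity)

noncomputable def bratteliGF (k : ℕ) (x : ℝ) (n : ℕ) : ℝ :=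
  ∑' j, (bratteliD k n j : ℝ) * x ^ j

section GeneratingFunction

variable {k : ℕ} {x : ℝ}

theorem bratteliGF_eq_zero_of_lt {n : ℕ} (h : k < n) : bratteliGF k x n = 0 := by
  simp [bratteliGF, bratteliD_eq_zero_of_lt h]

theorem bratteliGF_eq_add_mul_tsum_succ {n : ℕ}
    (hs : Summable fun j => (bratteliD k n j : ℝ) * x ^ j) :
    bratteliGF k x n = bratteliD k n 0 + x * ∑' j, (bratteliD k n (j + 1) : ℝ) * x ^ j := by
  rw [bratteliGF, hs.tsum_eq_zero_add, ← tsum_mul_left, pow_zero, mul_one]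
  congr 1
  exact tsum_congr fun j => by ring

theorem bratteliGF_zero (hs : Summable fun j => (bratteliD k 0 j : ℝ) * x ^ j) :
    bratteliGF k x 0 = 1 + x * bratteliGF k x 1 := by
  simp only [bratteliGF_eq_add_mul_tsum_succ hs, bratteliD_zero_succ]
  simp [bratteliD, bratteliGF]

theorem bratteliGF_succ (hs : ∀ n, Summable fun j => (bratteliD k n j : ℝ) * x ^ j) {n : ℕ}
    (hn : n + 1 ≤ k) :
    bratteliGF k x (n + 1) = x * (bratteliGF k x n + bratteliGF k x (n + 2)) := by
  simp only [bratteliGF_eq_add_mul_tsum_succ (hs (n + 1)), bratteliD_succ_succ hn, Nat.cast_add,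
    add_mul]
  rw [(hs n).tsum_add (hs (n + 2))]
  simp [bratteliD, bratteliGF]

end GeneratingFunction

theorem eq_eval_U_mul_of_recurrence {R : Type*} [CommRing R] {a : ℕ → R} {t : R} {N : ℕ}
    (h0 : a 0 = 0) (hrec : ∀ m < N, a (m + 2) = 2 * t * a (m + 1) - a m) (m : ℕ) :
    m ≤ N + 1 → a m = (U R ((m : ℤ) - 1)).eval t * a 1 := by
  induction m using Nat.twoStepInduction with
  | zero => simp [h0]
  | one => simp
  | more m ih ih_succ =>
    intro hm
    have hidx : ((m + 2 : ℕ) : ℤ) - 1 = (m : ℤ) - 1 + 2 := by push_cast; ring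
    have hidx_succ : ((m + 1 : ℕ) : ℤ) - 1 = (m : ℤ) - 1 + 1 := by push_cast; ring
    rw [hrec m (by omega), ih (by omega), ih_succ (by omega), hidx, hidx_succ, U_add_two]
    simp only [eval_sub, eval_mul, eval_ofNat, eval_X]
    ring

theorem mul_eval_U_mul_eq_of_boundary {R : Type*} [CommRing R] {F : ℕ → R} {x t : R} {k : ℕ}
    (hxt : 2 * t * x = 1) (htop : F (k + 1) = 0) (hbot : F 0 = 1 + x * F 1)
    (hrec : ∀ n, n + 1 ≤ k → F (n + 1) = x * (F n + F (n + 2))) {i : ℕ} (hi : i ≤ k) :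
    x * (U R ((k : ℤ) + 1)).eval t * F i = (U R ((k : ℤ) - i)).eval t := by
  set a : ℕ → R := fun m => F (k + 1 - m) with ha
  have ha_rec : ∀ m < k, a (m + 2) = 2 * t * a (m + 1) - a m := by
    intro m hm
    have h := hrec (k - m - 1) (by omega)
    simp only [ha, show k + 1 - (m + 2) = k - m - 1 by omega,
      show k + 1 - (m + 1) = k - m - 1 + 1 by omega, show k + 1 - m = k - m - 1 + 2 by omega]
    linear_combination (-2 * t) * h - (F (k - m - 1) + F (k - m - 1 + 2)) * hxt
  have hU := eq_eval_U_mul_of_recurrence (by simpa [ha] using htop) ha_rec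
  have hF : ∀ n ≤ k + 1, F n = (U R ((k : ℤ) - n)).eval t * F k := by
    intro n hn
    have h := hU (k + 1 - n) (by omega)
    rw [show ((k + 1 - n : ℕ) : ℤ) - 1 = k - n by omega] at h
    simpa [ha, show k + 1 - (k + 1 - n) = n by omega] using h
  have hnorm : x * (U R ((k : ℤ) + 1)).eval t * F k = 1 := by
    have h0 := hF 0 (by omega)
    have h1 := hF 1 (by omega)
    rw [U_add_one]
    simp only [eval_sub, eval_mul, eval_ofNat, eval_X]
    push_cast at h0 h1
    rw [sub_zero] at h0
    linear_combination hbot - h0 + x * h1 + ((U R k).eval t * F k) * hxt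
  rw [hF i (by omega)]
  linear_combination (U R ((k : ℤ) - i)).eval t * hnorm

theorem bratteliD_generating_function (k i : ℕ) (hik : i ≤ k) (x : ℝ)
    (hx0 : 0 < |x|) (hx1 : |x| < 1 / (2 * Real.cos (π / (k + 2)))) :
    Summable (fun j : ℕ => |(bratteliD k i j : ℝ) * x ^ j|) ∧
    x * (Chebyshev.U ℝ ((k : ℤ) + 1)).eval (1 / (2 * x)) *
        (∑' j : ℕ, (bratteliD k i j : ℝ) * x ^ j) =
      (Chebyshev.U ℝ ((k : ℤ) - i)).eval (1 / (2 * x)) := by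
  have hx : 2 * cos (π / (k + 2)) * |x| < 1 := by
    have hc : 0 < 2 * cos (π / (k + 2)) := one_div_pos.mp (hx0.trans hx1)
    rw [mul_comm]
    exact (lt_div_iff₀ hc).mp hx1
  have hs n := (summable_abs_bratteliD_mul_pow k n hx).of_abs
  refine ⟨summable_abs_bratteliD_mul_pow k i hx, ?_⟩
  exact mul_eval_U_mul_eq_of_boundary (F := bratteliGF k x)
    (by field_simp [abs_pos.mp hx0]) (bratteliGF_eq_zero_of_lt k.lt_succ_self)
    (bratteliGF_zero (hs 0)) (fun n hn => bratteliGF_succ hs hn) hik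
end

section
/- For all integers k ≥ 1 and 0 ≤ i ≤ k, the limit as j → ∞ along integers j with j ≡ i (mod 2) of D_k(i,j) / (2·cos(π/(k+2)))^j exists and equals (4/(k+2)) · sin²(π/(k+2)) · U_{k-i}(cos(π/(k+2))); in particular D_k(i,j) grows like (2·cos(π/(k+2)))^j as j → ∞ with i + j even. -/
/-!
For `m ≤ k + 1` and `θ = π / (k + 2)`, the vector `i ↦ sin ((i + 1) m θ)` satisfies the recursion
defining `D_k` with eigenvalue `2 cos (m θ)`, and these vectors are orthogonal. Expanding the
initial vector in them gives
`D_k(i, j) = 2 / (k + 2) * ∑ m, (2 cos (m θ)) ^ j * sin (m θ) * sin ((i + 1) m θ)`.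
After division by `(2 cos θ) ^ j` the terms with `2 ≤ m ≤ k` decay geometrically, the term `m = 1`
is constant and the term `m = k + 1` equals it up to the sign `(-1) ^ (i + j)`. Along
`j ≡ i [MOD 2]` the sum therefore tends to twice the `m = 1` term, and
`sin ((i + 1) θ) = U_{k-i}(cos θ) sin θ`.
-/

open Real Polynomial Polynomial.Chebyshev Filter

open Finset Topology

theorem two_mul_sin_half_mul_sum_range_cos (φ : ℝ) (N : ℕ) :
    2 * sin (φ / 2) * ∑ m ∈ range N, cos (m * φ) = sin (N * φ - φ / 2) + sin (φ / 2) := by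
  have hstep (m : ℕ) : 2 * sin (φ / 2) * cos (m * φ) =
      sin ((m + 1 : ℕ) * φ - φ / 2) - sin (m * φ - φ / 2) := by
    rw [show ((m + 1 : ℕ) : ℝ) * φ - φ / 2 = m * φ + φ / 2 by push_cast; ring,
      sin_add, sin_sub]
    ring
  rw [mul_sum, sum_congr rfl fun m _ => hstep m,
    sum_range_sub (fun m : ℕ => sin (m * φ - φ / 2))]
  simp

theorem sum_range_cos_nat_mul_pi_div (N r : ℕ) (hr : 0 < r) (hrN : r < 2 * N) :
    ∑ m ∈ range N, cos (m * (r * π / N)) = (1 - (-1) ^ r) / 2 := by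
  have hN : (0 : ℝ) < N := by exact_mod_cast (show 0 < N by omega)
  have hsin : 0 < sin (r * π / N / 2) := by
    apply sin_pos_of_pos_of_lt_pi (by positivity)
    rw [div_div, div_lt_iff₀ (by positivity)]
    have : (r : ℝ) < 2 * N := by exact_mod_cast hrN
    nlinarith [pi_pos]
  have h := two_mul_sin_half_mul_sum_range_cos (r * π / N) N
  rw [show (N : ℝ) * (r * π / N) - r * π / N / 2 = r * π - r * π / N / 2 by field_simp,
    sin_nat_mul_pi_sub] at h
  refine mul_left_cancel₀ (mul_pos two_pos hsin).ne' ?_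
  rw [h]; ring

theorem sum_range_sin_mul_sin_succ_mul (N i : ℕ) (hi : i + 2 < 2 * N) :
    ∑ m ∈ range N, sin (m * (π / N)) * sin ((i + 1) * (m * (π / N))) =
      if i = 0 then (N : ℝ) / 2 else 0 := by
  have hprod (m : ℕ) : sin (m * (π / N)) * sin ((i + 1) * (m * (π / N))) =
      (cos (m * (i * π / N)) - cos (m * ((i + 2 : ℕ) * π / N))) / 2 := by
    rw [eq_div_iff two_ne_zero, mul_comm _ (2 : ℝ), ← mul_assoc, two_mul_sin_mul_sin,
      ← cos_neg]
    push_cast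
    ring_nf
  rw [sum_congr rfl fun m _ => hprod m, ← sum_div, sum_sub_distrib,
    sum_range_cos_nat_mul_pi_div N (i + 2) (by omega) hi]
  rcases Nat.eq_zero_or_pos i with rfl | hi0
  · simp
  · rw [sum_range_cos_nat_mul_pi_div N i hi0 (by omega), if_neg hi0.ne', pow_add]
    ring

theorem sin_succ_mul_eigenvector {k i : ℕ} {x : ℝ} (hik : i ≤ k) (hx : sin ((k + 2) * x) = 0) :
    (if 1 ≤ i then sin (((i - 1 : ℕ) + 1) * x) else 0) +
      (if i + 1 ≤ k then sin (((i + 1 : ℕ) + 1) * x) else 0) = 2 * cos x * sin ((i + 1) * x) := by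
  have hprev : (if 1 ≤ i then sin (((i - 1 : ℕ) + 1) * x) else 0) = sin (i * x) := by
    split_ifs with hi
    · rw [Nat.cast_sub hi, Nat.cast_one, sub_add_cancel]
    · simp [show i = 0 by omega]
  have hnext : (if i + 1 ≤ k then sin (((i + 1 : ℕ) + 1) * x) else 0) = sin ((i + 2) * x) := by
    split_ifs with hi
    · push_cast; ring_nf
    · rw [show i = k by omega, hx]
  rw [hprev, hnext, show (i : ℝ) * x = (i + 1) * x - x by ring,
    show ((i : ℝ) + 2) * x = (i + 1) * x + x by ring, sin_sub, sin_add]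
  ring

theorem bratteliD_eq_sum (k j i : ℕ) (hik : i ≤ k) :
    (bratteliD k i j : ℝ) = 2 / (k + 2) * ∑ m ∈ range (k + 2),
      (2 * cos (m * (π / (k + 2)))) ^ j * sin (m * (π / (k + 2))) *
        sin ((i + 1) * (m * (π / (k + 2)))) := by
  induction j generalizing i with
  | zero =>
    have h := sum_range_sin_mul_sin_succ_mul (k + 2) i (by omega)
    push_cast at h
    simp only [pow_zero, one_mul, h, bratteliD]
    split_ifs <;> field_simp <;> norm_num
  | succ j ih =>
    have hx (m : ℕ) : sin ((k + 2) * (m * (π / (k + 2)))) = 0 := by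
      rw [show ((k : ℝ) + 2) * (m * (π / (k + 2))) = m * π by field_simp]
      exact sin_nat_mul_pi m
    have hprev : ((if 1 ≤ i then bratteliD k (i - 1) j else 0 : ℕ) : ℝ) =
        2 / (k + 2) * ∑ m ∈ range (k + 2), (2 * cos (m * (π / (k + 2)))) ^ j *
          sin (m * (π / (k + 2))) *
            if 1 ≤ i then sin (((i - 1 : ℕ) + 1) * (m * (π / (k + 2)))) else 0 := by
      split_ifs with hi
      · exact ih (i - 1) (by omega)
      · simp
    have hnext : ((if i + 1 ≤ k then bratteliD k (i + 1) j else 0 : ℕ) : ℝ) =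
        2 / (k + 2) * ∑ m ∈ range (k + 2), (2 * cos (m * (π / (k + 2)))) ^ j *
          sin (m * (π / (k + 2))) *
            if i + 1 ≤ k then sin (((i + 1 : ℕ) + 1) * (m * (π / (k + 2)))) else 0 := by
      split_ifs with hi
      · exact ih (i + 1) hi
      · simp
    rw [bratteliD, if_pos hik, Nat.cast_add, hprev, hnext, ← mul_add, ← sum_add_distrib]
    congr 1
    refine sum_congr rfl fun m _ => ?_
    rw [← mul_add, sin_succ_mul_eigenvector hik (hx m), pow_succ]
    ring

theorem abs_cos_lt_cos {θ x : ℝ} (hθ : 0 ≤ θ) (hθx : θ < x) (hxπ : x < π - θ) :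
    |cos x| < cos θ := by
  refine abs_lt.mpr ⟨?_, cos_lt_cos_of_nonneg_of_le_pi hθ (by linarith) hθx⟩
  rw [← cos_pi_sub]
  exact cos_lt_cos_of_nonneg_of_le_pi (by linarith) (by linarith) hxπ

theorem sin_mul_sin_succ_mul_pi_sub (i : ℕ) (θ : ℝ) :
    sin (π - θ) * sin ((i + 1) * (π - θ)) = (-1) ^ i * (sin θ * sin ((i + 1) * θ)) := by
  rw [sin_pi_sub, show ((i : ℝ) + 1) * (π - θ) = (i + 1 : ℕ) * π - (i + 1) * θ by push_cast; ring,
    sin_nat_mul_pi_sub, pow_succ]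
  ring

theorem cos_pi_div_add_two_pos {k : ℕ} (hk : 1 ≤ k) : 0 < cos (π / (k + 2)) := by
  have hk' : (1 : ℝ) ≤ k := by exact_mod_cast hk
  have hθ : 0 < π / (k + 2) := by positivity
  exact cos_pos_of_mem_Ioo
    ⟨by linarith [pi_pos], div_lt_div_of_pos_left pi_pos two_pos (by linarith)⟩

theorem tendsto_cos_mul_div_cos_pow {k m : ℕ} (hm : 2 ≤ m) (hmk : m ≤ k) :
    Tendsto (fun j : ℕ => (cos (m * (π / (k + 2))) / cos (π / (k + 2))) ^ j) atTop (𝓝 0) := by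
  have hθ : 0 < π / (k + 2) := by positivity
  have hπ : ((k : ℝ) + 2) * (π / (k + 2)) = π := by field_simp
  have hm' : (2 : ℝ) ≤ m := by exact_mod_cast hm
  have hmk' : (m : ℝ) ≤ k := by exact_mod_cast hmk
  have hcos := cos_pi_div_add_two_pos (show 1 ≤ k by omega)
  apply tendsto_pow_atTop_nhds_zero_of_abs_lt_one
  rw [abs_div, abs_of_pos hcos, div_lt_one hcos]
  exact abs_cos_lt_cos hθ.le (by nlinarith) (by nlinarith)

theorem tendsto_sum_cos_div_cos_pow (k i : ℕ) (hk : 1 ≤ k) :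
    Tendsto (fun j : ℕ => ∑ m ∈ range (k + 2),
        (cos (m * (π / (k + 2))) / cos (π / (k + 2))) ^ j *
          (sin (m * (π / (k + 2))) * sin ((i + 1) * (m * (π / (k + 2))))))
      (atTop ⊓ 𝓟 {j | j % 2 = i % 2})
      (𝓝 (2 * (sin (π / (k + 2)) * sin ((i + 1) * (π / (k + 2)))))) := by
  set θ := π / (k + 2) with hθ
  set s := sin θ * sin ((i + 1) * θ)
  have hcos : cos θ ≠ 0 := (cos_pi_div_add_two_pos hk).ne'
  have hterm (m : ℕ) (hm : m ∈ range (k + 2)) : Tendsto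
      (fun j : ℕ => (cos (m * θ) / cos θ) ^ j * (sin (m * θ) * sin ((i + 1) * (m * θ))))
      (atTop ⊓ 𝓟 {j | j % 2 = i % 2})
      (𝓝 ((if m = 1 then s else 0) + (if m = k + 1 then s else 0))) := by
    rw [mem_range] at hm
    by_cases h1 : m = 1
    · simpa [h1, hcos, show k ≠ 0 by omega] using tendsto_const_nhds
    by_cases hk1 : m = k + 1
    · have hreflect : ((k + 1 : ℕ) : ℝ) * θ = π - θ := by
        rw [hθ]; field_simp; push_cast; ring
      rw [hk1, hreflect, cos_pi_sub, neg_div, div_self hcos, sin_mul_sin_succ_mul_pi_sub,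
        if_neg (by omega), if_pos rfl, zero_add]
      refine tendsto_const_nhds.congr' ?_
      rw [EventuallyEq, eventually_inf_principal]
      filter_upwards with j (hj : j % 2 = i % 2)
      rw [neg_one_pow_eq_pow_mod_two, hj, ← neg_one_pow_eq_pow_mod_two, ← mul_assoc, ← mul_pow]
      simp [s]
    rw [if_neg h1, if_neg hk1, add_zero]
    rcases Nat.eq_zero_or_pos m with rfl | hm0
    · simpa using tendsto_const_nhds
    · simpa using ((tendsto_cos_mul_div_cos_pow (k := k) (m := m) (by omega) (by omega)).mul_const
        (sin (m * θ) * sin ((i + 1) * (m * θ)))).mono_left inf_le_left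
  convert tendsto_finsetSum _ hterm using 2
  rw [sum_add_distrib, sum_ite_eq', sum_ite_eq', if_pos (by simp), if_pos (by simp)]
  ring

theorem bratteliD_asymptotics (k i : ℕ) (hk : 1 ≤ k) (hik : i ≤ k) :
    Filter.Tendsto
      (fun j : ℕ => (bratteliD k i j : ℝ) / (2 * Real.cos (π / (k + 2))) ^ j)
      (Filter.atTop ⊓ Filter.principal {j : ℕ | j % 2 = i % 2})
      (nhds ((4 / (k + 2)) * (Real.sin (π / (k + 2))) ^ 2 *
        (Chebyshev.U ℝ ((k : ℤ) - i)).eval (Real.cos (π / (k + 2))))) := by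
  set θ := π / (k + 2) with hθ
  have hratio (j : ℕ) : (bratteliD k i j : ℝ) / (2 * cos θ) ^ j =
      2 / (k + 2) * ∑ m ∈ range (k + 2),
        (cos (m * θ) / cos θ) ^ j * (sin (m * θ) * sin ((i + 1) * (m * θ))) := by
    rw [bratteliD_eq_sum k j i hik, mul_div_assoc, sum_div]
    congr 1
    refine sum_congr rfl fun m _ => ?_
    rw [mul_assoc, mul_div_right_comm, ← div_pow, mul_div_mul_left _ _ two_ne_zero]
  have hU : (U ℝ ((k : ℤ) - i)).eval (cos θ) * sin θ = sin ((i + 1) * θ) := by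
    rw [U_real_cos, ← sin_pi_sub]
    congr 1
    rw [hθ]; field_simp; push_cast; ring
  have hlimit : 4 / (k + 2) * sin θ ^ 2 * (U ℝ ((k : ℤ) - i)).eval (cos θ) =
      2 / (k + 2) * (2 * (sin θ * sin ((i + 1) * θ))) := by
    rw [← hU]; ring
  simp_rw [hratio]
  rw [hlimit]
  exact (tendsto_sum_cos_div_cos_pow k i hk).const_mul _
end

section
/- For all integers j ≥ 0: D_3(0, 2j+2) = F_{2j+1}, D_3(1, 2j+1) = F_{2j+1}, D_3(2, 2j+2) = F_{2j+2}, and D_3(3, 2j+3) = F_{2j+2}, where F_m is the m-th Fibonacci number. -/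
/-! In the level-3 diagram the odd column at height 1 and the even column at height 2 feed each
other: `D(1, 2j+3) = D(1, 2j+1) + D(2, 2j+2)` and `D(2, 2j+4) = D(1, 2j+3) + D(2, 2j+2)`, which is
the Fibonacci recursion interleaved; the boundary heights 0 and 3 merely copy their single
neighbour. -/

namespace bratteliD

variable {k : ℕ}

theorem zero_succ (hk : 1 ≤ k) (n : ℕ) : bratteliD k 0 (n + 1) = bratteliD k 1 n := by
  simp [bratteliD, hk]

theorem succ_succ (i : ℕ) (hi : i + 1 < k) (n : ℕ) :
    bratteliD k (i + 1) (n + 1) = bratteliD k i n + bratteliD k (i + 2) n := by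
  simp [bratteliD, hi.le, Nat.succ_le_of_lt hi]

theorem self_succ (hk : 1 ≤ k) (n : ℕ) : bratteliD k k (n + 1) = bratteliD k (k - 1) n := by
  simp [bratteliD, hk]

theorem three_one_odd_and_two_even (j : ℕ) :
    bratteliD 3 1 (2 * j + 1) = Nat.fib (2 * j + 1) ∧
    bratteliD 3 2 (2 * j + 2) = Nat.fib (2 * j + 2) := by
  induction j with
  | zero => decide
  | succ j ih =>
    obtain ⟨h1, h2⟩ := ih
    have h1' : bratteliD 3 1 (2 * j + 3) = Nat.fib (2 * j + 3) := by
      rw [succ_succ 0 (by norm_num), zero_succ (by norm_num), h1, h2]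
      exact Nat.fib_add_two.symm
    refine ⟨h1', ?_⟩
    rw [show 2 * (j + 1) + 2 = 2 * j + 3 + 1 by ring, succ_succ 1 (by norm_num), h1',
      self_succ (k := 3) (by norm_num), h2, add_comm, ← Nat.fib_add_two]

end bratteliD

theorem bratteliD_three_values (j : ℕ) :
    bratteliD 3 0 (2 * j + 2) = Nat.fib (2 * j + 1) ∧
    bratteliD 3 1 (2 * j + 1) = Nat.fib (2 * j + 1) ∧
    bratteliD 3 2 (2 * j + 2) = Nat.fib (2 * j + 2) ∧
    bratteliD 3 3 (2 * j + 3) = Nat.fib (2 * j + 2) := by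
  obtain ⟨h1, h2⟩ := bratteliD.three_one_odd_and_two_even j
  exact ⟨by rw [bratteliD.zero_succ (by norm_num), h1], h1, h2,
    by rw [bratteliD.self_succ (by norm_num), h2]⟩
end
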